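/- Assume q_∞ ≠ 1. Let φ = Σ_{p=1}^{n−1} c_p·[U_p] ∈ V satisfy d(φ) = 0. If 1 ≤ i ≤ n−1 and the lines H_i and H_{i+1} are not parallel, then c_i = 0. -/

import Mathlib

/-!
The point is a chamber `C` whose sign pattern is opposite to that of `U_i`: `α_1, …, α_i`
negative and `α_{i+1}, …, α_n` positive on `C`. In the chosen coordinates the line `H_k` is
`x₁ = a_k + s_k x₂` with `s_1 ≥ … ≥ s_n`, and `s_j > s_k` for non-parallel `H_j`, `H_k`,
`j < k`, because they meet above the `x₁`-axis. As `s_i > s_{i+1}`, a point high up halfway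
between `H_i` and `H_{i+1}` has this sign pattern. Such a chamber is none of
`U_0, …, U_{n-1}, U_0^∨`, and every line separates it from `U_i`, so `Δ(U_i, C) = R - R⁻¹`
with `R² = ∏ q_k = q_∞⁻¹ ≠ 1`. Among the `d([U_p])` only `d([U_i])` involves `C`, so the
`C`-coefficient of `d(φ)` is `c_i Δ(U_i, C)`.
-/

open scoped Classical

noncomputable section

abbrev Pt : Type := ℝ × ℝ

/-- An affine-linear functional `a*x + b*y + c` on `ℝ²` with nonzero linear part. -/
structure AffForm : Type where
  a : ℝ
  b : ℝ
  c : ℝ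
  nondeg : a ≠ 0 ∨ b ≠ 0

namespace AffForm

def eval (f : AffForm) (p : Pt) : ℝ := f.a * p.1 + f.b * p.2 + f.c

def line (f : AffForm) : Set Pt := {p | f.eval p = 0}

def Parallel (f g : AffForm) : Prop := f.a * g.b = f.b * g.a

end AffForm

variable {n : ℕ}

/-- An arrangement: at least two distinct affine lines, not all parallel. -/
def IsArrangement (α : Fin n → AffForm) : Prop :=
  2 ≤ n ∧ (∀ i j : Fin n, i ≠ j → (α i).line ≠ (α j).line) ∧
    ∃ i j : Fin n, ¬ (α i).Parallel (α j)

def complement (α : Fin n → AffForm) : Set Pt := {p | ∀ i, (α i).eval p ≠ 0}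

/-- A chamber: a connected component of the complement of the union of the lines. -/
def IsChamber (α : Fin n → AffForm) (C : Set Pt) : Prop :=
  ∃ p ∈ complement α, C = connectedComponentIn (complement α) p

/-- `Sep(C, C')`: the set of indices `i` such that `α i` is positive on one of `C, C'`
and negative on the other. -/
def SepSet (α : Fin n → AffForm) (C C' : Set Pt) : Finset (Fin n) :=
  Finset.univ.filter fun i =>
    ((∀ p ∈ C, 0 < (α i).eval p) ∧ (∀ p ∈ C', (α i).eval p < 0)) ∨
    ((∀ p ∈ C, (α i).eval p < 0) ∧ (∀ p ∈ C', 0 < (α i).eval p))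

/-- `Δ(C, C') = ∏_{i ∈ Sep(C,C')} r i − ∏_{i ∈ Sep(C,C')} (r i)⁻¹`. -/
def Delta (α : Fin n → AffForm) (r : Fin n → ℂ) (C C' : Set Pt) : ℂ :=
  (∏ i ∈ SepSet α C C', r i) - ∏ i ∈ SepSet α C C', (r i)⁻¹

/-- The open strip between two parallel lines `f.line` and `g.line`. -/
def Strip (f g : AffForm) : Set Pt :=
  {p | ∀ q ∈ g.line,
    (0 < f.eval p ∧ f.eval p < f.eval q) ∨ (f.eval q < f.eval p ∧ f.eval p < 0)}

/-- A band: the open strip between two parallel lines of the arrangement containing no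
other line of the arrangement parallel to them. -/
def IsBand (α : Fin n → AffForm) (B : Set Pt) : Prop :=
  ∃ i j : Fin n, i ≠ j ∧ (α i).Parallel (α j) ∧ B = Strip (α i) (α j) ∧
    ∀ k : Fin n, (α k).Parallel (α i) → (α k).line ∩ B = ∅

/-- The data of a band `B` bounded by the parallel lines `H i` and `H j`, together with its
two unbounded chambers `U1` (= `U_1(B)`) and `U2` (= `U_2(B)`). -/
def BandData (α : Fin n → AffForm) (i j : Fin n) (B U1 U2 : Set Pt) : Prop :=
  i ≠ j ∧ (α i).Parallel (α j) ∧ B = Strip (α i) (α j) ∧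
  (∀ k : Fin n, (α k).Parallel (α i) → (α k).line ∩ B = ∅) ∧
  IsChamber α U1 ∧ IsChamber α U2 ∧ U1 ⊆ B ∧ U2 ⊆ B ∧
  ¬ Bornology.IsBounded U1 ∧ ¬ Bornology.IsBounded U2 ∧ U1 ≠ U2

/-- Coordinates as in the paper: every intersection point of two lines has `x₂ > 0`, line
`H i` meets the `x₁`-axis exactly at `(a i, 0)` with `0 < a 1 < … < a n`, and each
`α i` is negative at the origin. -/
def GoodCoords (α : Fin n → AffForm) (a : Fin n → ℝ) : Prop :=
  (∀ i j : Fin n, i ≠ j → ∀ p : Pt, p ∈ (α i).line → p ∈ (α j).line → 0 < p.2) ∧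
  (∀ i : Fin n, (α i).line ∩ {p : Pt | p.2 = 0} = {((a i : ℝ), (0 : ℝ))}) ∧
  StrictMono a ∧ (∀ i : Fin n, 0 < a i) ∧ ∀ i : Fin n, (α i).eval (0, 0) < 0

/-- `Upos α p = ∩_{i ≤ p} {α_i > 0} ∩ ∩_{i > p} {α_i < 0}` in the 1-indexed convention of
the paper: for `1 ≤ p ≤ n-1` it is the chamber `U_p`, `Upos α 0 = U_0`, and
`Upos α n = U_0^∨`. -/
def Upos (α : Fin n → AffForm) (p : ℕ) : Set Pt :=
  {x : Pt | ∀ i : Fin n, if (i : ℕ) < p then 0 < (α i).eval x else (α i).eval x < 0}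

/-- `ch²(A)`: the chambers other than `U_0, U_1, …, U_{n-1}, U_0^∨`. -/
def ch2 (α : Fin n → AffForm) (chambers : Finset (Set Pt)) : Finset (Set Pt) :=
  chambers.filter fun C => ∀ p ≤ n, C ≠ Upos α p

/-- `d([U_p]) = −Σ_{C ∈ ch², α_p > 0, α_{p+1} < 0 on C} Δ(U_p, C)·[C]
+ Σ_{C ∈ ch², α_p < 0, α_{p+1} > 0 on C} Δ(U_p, C)·[C]`, where `i`, `j` are the indices of
the lines `H_p`, `H_{p+1}` bounding `U_p` and `U = U_p`. -/
def dChain (α : Fin n → AffForm) (chambers : Finset (Set Pt)) (r : Fin n → ℂ)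
    (i j : Fin n) (U : Set Pt) : Set Pt →₀ ℂ :=
  -(∑ C ∈ (ch2 α chambers).filter
      (fun C => (∀ x ∈ C, 0 < (α i).eval x) ∧ ∀ x ∈ C, (α j).eval x < 0),
      Finsupp.single C (Delta α r U C)) +
  ∑ C ∈ (ch2 α chambers).filter
      (fun C => (∀ x ∈ C, (α i).eval x < 0) ∧ ∀ x ∈ C, 0 < (α j).eval x),
      Finsupp.single C (Delta α r U C)

theorem IsPreconnected.neg_of_neg {X : Type*} [TopologicalSpace X] {S : Set X}
    (hS : IsPreconnected S) {f : X → ℝ} (hf : ContinuousOn f S) (hf0 : ∀ x ∈ S, f x ≠ 0)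
    {x₀ x : X} (hx₀ : x₀ ∈ S) (hx : x ∈ S) (hneg : f x₀ < 0) : f x < 0 := by
  by_contra! hpos
  obtain ⟨y, hyS, hy0⟩ := hS.intermediate_value hx₀ hx hf ⟨hneg.le, hpos⟩
  exact hf0 y hyS hy0

namespace AffForm

theorem continuous_eval (f : AffForm) : Continuous f.eval := by
  unfold eval
  fun_prop

/-- The line `f.line` is `x₁ = f.invSlope * x₂ + const` when `f.a ≠ 0`. -/
def invSlope (f : AffForm) : ℝ := -f.b / f.a

theorem parallel_iff_invSlope_eq {f g : AffForm} (hf : f.a ≠ 0) (hg : g.a ≠ 0) :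
    f.Parallel g ↔ f.invSlope = g.invSlope := by
  rw [Parallel, invSlope, invSlope, div_eq_div_iff hf hg]
  constructor <;> intro h <;> linarith

end AffForm

def Uneg (α : Fin n → AffForm) (p : ℕ) : Set Pt :=
  {x : Pt | ∀ i : Fin n, if (i : ℕ) < p then (α i).eval x < 0 else 0 < (α i).eval x}

section Uneg

variable {α : Fin n → AffForm}

theorem Uneg_subset_complement (p : ℕ) : Uneg α p ⊆ complement α := by
  intro x hx k
  have hk := hx k
  split_ifs at hk
  exacts [hk.ne, hk.ne']

theorem connectedComponentIn_complement_subset_Uneg {p : ℕ} {x₀ : Pt} (hx₀ : x₀ ∈ Uneg α p) :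
    connectedComponentIn (complement α) x₀ ⊆ Uneg α p := by
  set S := connectedComponentIn (complement α) x₀
  have hS : IsPreconnected S := isPreconnected_connectedComponentIn
  have hx₀S : x₀ ∈ S := mem_connectedComponentIn (Uneg_subset_complement p hx₀)
  have hS0 : ∀ k, ∀ x ∈ S, (α k).eval x ≠ 0 := fun k x hx =>
    connectedComponentIn_subset _ _ hx k
  intro x hx k
  have hk := hx₀ k
  split_ifs at hk ⊢
  · exact hS.neg_of_neg (α k).continuous_eval.continuousOn (hS0 k) hx₀S hx hk
  · have := hS.neg_of_neg (f := fun y => -(α k).eval y) (α k).continuous_eval.neg.continuousOn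
      (fun y hy => neg_ne_zero.2 (hS0 k y hy)) hx₀S hx (neg_neg_of_pos hk)
    exact neg_neg_iff_pos.1 this

theorem disjoint_Uneg_Upos {p : ℕ} (hp0 : 0 < p) (hpn : p < n) (q : ℕ) :
    Disjoint (Uneg α p) (Upos α q) := by
  rw [Set.disjoint_left]
  intro x hx hx'
  rcases Nat.eq_zero_or_pos q with rfl | hq
  · have h := hx ⟨n - 1, by omega⟩
    have h' := hx' ⟨n - 1, by omega⟩
    rw [if_neg (show ¬ n - 1 < p by omega)] at h
    rw [if_neg (Nat.not_lt_zero _)] at h'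
    linarith
  · have h := hx ⟨0, by omega⟩
    have h' := hx' ⟨0, by omega⟩
    rw [if_pos hp0] at h
    rw [if_pos hq] at h'
    linarith

theorem sepSet_Upos_eq_univ {p : ℕ} {C : Set Pt} (hC : C ⊆ Uneg α p) :
    SepSet α (Upos α p) C = Finset.univ := by
  refine Finset.eq_univ_iff_forall.2 fun k => Finset.mem_filter.2 ⟨Finset.mem_univ k, ?_⟩
  by_cases hk : (k : ℕ) < p
  · refine Or.inl ⟨fun x hx => ?_, fun x hx => ?_⟩
    · simpa [hk] using hx k
    · simpa [hk] using hC hx k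
  · refine Or.inr ⟨fun x hx => ?_, fun x hx => ?_⟩
    · simpa [hk] using hx k
    · simpa [hk] using hC hx k

theorem Delta_ne_zero_of_sepSet_eq_univ {r : Fin n → ℂ} (hr : ∀ k, r k ≠ 0)
    (hr1 : (∏ k, r k) ^ 2 ≠ 1) {C C' : Set Pt} (hCC' : SepSet α C C' = Finset.univ) :
    Delta α r C C' ≠ 0 := by
  rw [Delta, hCC', Finset.prod_inv_distrib, sub_ne_zero]
  intro h
  apply hr1
  rw [sq]
  nth_rewrite 2 [h]
  exact mul_inv_cancel₀ (Finset.prod_ne_zero_iff.2 fun k _ => hr k)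

theorem dChain_apply_of_subset_Uneg (chambers : Finset (Set Pt)) (r : Fin n → ℂ) {j k : Fin n}
    (hjk : (j : ℕ) + 1 = k) (U : Set Pt) {i : ℕ} {C : Set Pt} (hC2 : C ∈ ch2 α chambers)
    (hC : C.Nonempty) (hCi : C ⊆ Uneg α i) :
    dChain α chambers r j k U C = if (k : ℕ) = i then Delta α r U C else 0 := by
  obtain ⟨x, hx⟩ := hC
  have hsign : ∀ y ∈ C, ∀ l : Fin n,
      ((l : ℕ) < i → (α l).eval y < 0) ∧ (i ≤ l → 0 < (α l).eval y) := fun y hy l => by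
    have hl := hCi hy l
    split_ifs at hl with h
    exacts [⟨fun _ => hl, fun h' => absurd h (not_lt.2 h')⟩, ⟨fun h' => absurd h' h, fun _ => hl⟩]
  have hfirst : ¬ ((∀ y ∈ C, 0 < (α j).eval y) ∧ ∀ y ∈ C, (α k).eval y < 0) := by
    rintro ⟨hj, hk⟩
    by_cases hki : (k : ℕ) < i
    · linarith [hj x hx, (hsign x hx j).1 (by omega)]
    · linarith [hk x hx, (hsign x hx k).2 (by omega)]
  have hsecond : ((∀ y ∈ C, (α j).eval y < 0) ∧ ∀ y ∈ C, 0 < (α k).eval y) ↔ (k : ℕ) = i := by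
    constructor
    · rintro ⟨hj, hk⟩
      by_contra hki
      rcases Nat.lt_or_gt_of_ne hki with hlt | hgt
      · linarith [hk x hx, (hsign x hx k).1 hlt]
      · linarith [hj x hx, (hsign x hx j).2 (by omega)]
    · intro hki
      exact ⟨fun y hy => (hsign y hy j).1 (by omega), fun y hy => (hsign y hy k).2 (by omega)⟩
  simp only [dChain, Finsupp.add_apply, Finsupp.neg_apply, Finsupp.finsetSum_apply,
    Finsupp.single_apply, Finset.sum_ite_eq', Finset.mem_filter, hfirst, hsecond, hC2,
    and_false, true_and, if_false, neg_zero, zero_add]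

end Uneg

namespace GoodCoords

variable {α : Fin n → AffForm} {a : Fin n → ℝ}

theorem c_eq (h : GoodCoords α a) (k : Fin n) : (α k).c = -(α k).a * a k := by
  have hk : (a k, (0 : ℝ)) ∈ (α k).line ∩ {p : Pt | p.2 = 0} := by
    rw [h.2.1 k]
    rfl
  have hk0 : (α k).a * a k + (α k).b * 0 + (α k).c = 0 := hk.1
  linarith

theorem a_pos (h : GoodCoords α a) (k : Fin n) : 0 < (α k).a := by
  have h0 : (α k).a * 0 + (α k).b * 0 + (α k).c < 0 := h.2.2.2.2 k
  have hak := h.2.2.2.1 k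
  rw [h.c_eq k] at h0
  nlinarith

theorem eval_eq (h : GoodCoords α a) (k : Fin n) (x : Pt) :
    (α k).eval x = (α k).a * (x.1 - (α k).invSlope * x.2 - a k) := by
  have := (h.a_pos k).ne'
  rw [AffForm.eval, AffForm.invSlope, h.c_eq k]
  field_simp
  ring

theorem parallel_iff_invSlope_eq (h : GoodCoords α a) (j k : Fin n) :
    (α j).Parallel (α k) ↔ (α j).invSlope = (α k).invSlope :=
  AffForm.parallel_iff_invSlope_eq (h.a_pos j).ne' (h.a_pos k).ne'

theorem invSlope_lt (h : GoodCoords α a) {j k : Fin n} (hjk : j < k)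
    (hnp : ¬ (α j).Parallel (α k)) :
    (α k).invSlope < (α j).invSlope := by
  have hne : (α j).invSlope - (α k).invSlope ≠ 0 :=
    sub_ne_zero.2 fun heq => hnp ((h.parallel_iff_invSlope_eq j k).2 heq)
  -- the height at which the two lines meet
  set y := (a k - a j) / ((α j).invSlope - (α k).invSlope)
  have hsy : ((α j).invSlope - (α k).invSlope) * y = a k - a j := mul_div_cancel₀ _ hne
  have hy : 0 < y := by
    refine h.1 j k hjk.ne (a j + (α j).invSlope * y, y) ?_ ?_
    · show (α j).eval _ = 0
      rw [h.eval_eq]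
      ring
    · show (α k).eval _ = 0
      rw [h.eval_eq]
      exact mul_eq_zero_of_right _ (by linear_combination hsy)
  have hsub : 0 < (α j).invSlope - (α k).invSlope := by
    have hak : a j < a k := h.2.2.1 hjk
    nlinarith
  linarith

theorem invSlope_le (h : GoodCoords α a) {j k : Fin n} (hjk : j ≤ k) :
    (α k).invSlope ≤ (α j).invSlope := by
  rcases hjk.lt_or_eq with hlt | rfl
  · by_cases hp : (α j).Parallel (α k)
    · exact ((h.parallel_iff_invSlope_eq j k).1 hp).ge
    · exact (h.invSlope_lt hlt hp).le
  · exact le_rfl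

theorem exists_neg_of_le_pos_of_ge (h : GoodCoords α a) {j k : Fin n} (hjk : j < k)
    (hnp : ¬ (α j).Parallel (α k)) :
    ∃ x : Pt, (∀ l ≤ j, (α l).eval x < 0) ∧ ∀ l, k ≤ l → 0 < (α l).eval x := by
  obtain ⟨M, hM⟩ := Finite.exists_le fun l => |a l|
  have hM0 : 0 ≤ M := (abs_nonneg _).trans (hM j)
  have hδ : 0 < (α j).invSlope - (α k).invSlope := sub_pos.2 (h.invSlope_lt hjk hnp)
  -- at height `y` the lines `α j`, `α k` are `2M + 2` apart; take the midpoint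
  set y := (2 * M + 2) / ((α j).invSlope - (α k).invSlope)
  have hy : 0 ≤ y := by positivity
  have hδy : ((α j).invSlope - (α k).invSlope) * y = 2 * M + 2 := mul_div_cancel₀ _ hδ.ne'
  refine ⟨(((α j).invSlope + (α k).invSlope) / 2 * y, y), fun l hl => ?_, fun l hl => ?_⟩
  · rw [h.eval_eq]
    refine mul_neg_of_pos_of_neg (h.a_pos l) ?_
    linarith [mul_le_mul_of_nonneg_right (h.invSlope_le hl) hy, neg_abs_le (a l), hM l]
  · rw [h.eval_eq]
    refine mul_pos (h.a_pos l) ?_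
    linarith [mul_le_mul_of_nonneg_right (h.invSlope_le hl) hy, le_abs_self (a l), hM l]

theorem exists_mem_Uneg (h : GoodCoords α a) {j k : Fin n} (hjk : (j : ℕ) + 1 = k)
    (hnp : ¬ (α j).Parallel (α k)) : ∃ x, x ∈ Uneg α k := by
  obtain ⟨x, hneg, hpos⟩ := h.exists_neg_of_le_pos_of_ge (Fin.lt_def.2 (by omega)) hnp
  refine ⟨x, fun l => ?_⟩
  split_ifs with hl
  · exact hneg l (Fin.le_iff_val_le_val.2 (by omega))
  · exact hpos l (Fin.le_iff_val_le_val.2 (by omega))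

end GoodCoords

open Fin.NatCast

/-- `n = m + 2`, and the paper's `H_p` is `α ↑(p - 1)`. -/
theorem statement5_general {m : ℕ} (α : Fin (m + 2) → AffForm) (a : Fin (m + 2) → ℝ)
    (hco : GoodCoords α a)
    (chambers : Finset (Set Pt)) (hch : ∀ C : Set Pt, C ∈ chambers ↔ IsChamber α C)
    (q r : Fin (m + 2) → ℂ) (hr0 : ∀ i, r i ≠ 0)
    (hrq : ∀ i, r i ^ 2 = q i)
    (hqinf : (∏ i, q i)⁻¹ ≠ 1)
    (c : ℕ → ℂ)
    (hker : ∑ p ∈ Finset.Icc 1 (m + 1),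
      c p • dChain α chambers r ↑(p - 1) ↑p (Upos α p) = 0)
    (i : ℕ) (hi1 : 1 ≤ i) (hin : i ≤ m + 1)
    (hnp : ¬ (α ↑(i - 1)).Parallel (α ↑i)) :
    c i = 0 := by
  have hcast : ∀ p ≤ m + 1, ((p : Fin (m + 2)) : ℕ) = p := fun p hp =>
    Fin.val_cast_of_lt (by omega)
  obtain ⟨x₀, hx₀⟩ := hco.exists_mem_Uneg (by rw [hcast _ (by omega), hcast _ hin]; omega) hnp
  rw [hcast _ hin] at hx₀
  set C := connectedComponentIn (complement α) x₀
  have hCi : C ⊆ Uneg α i := connectedComponentIn_complement_subset_Uneg hx₀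
  have hx₀C : x₀ ∈ C := mem_connectedComponentIn (Uneg_subset_complement i hx₀)
  have hC2 : C ∈ ch2 α chambers := Finset.mem_filter.2
    ⟨(hch C).2 ⟨x₀, Uneg_subset_complement i hx₀, rfl⟩, fun p _ hCp =>
      Set.disjoint_left.1 (disjoint_Uneg_Upos hi1 (by omega) p) (hCi hx₀C) (hCp ▸ hx₀C)⟩
  have hR : (∏ k, r k) ^ 2 ≠ 1 := by
    rw [← Finset.prod_pow]
    simpa only [hrq] using inv_ne_one.1 hqinf
  have hΔ := Delta_ne_zero_of_sepSet_eq_univ hr0 hR (sepSet_Upos_eq_univ hCi)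
  have hterm : ∀ p ∈ Finset.Icc 1 (m + 1),
      (c p • dChain α chambers r ↑(p - 1) ↑p (Upos α p)) C =
        if p = i then c p * Delta α r (Upos α p) C else 0 := fun p hp => by
    rw [Finset.mem_Icc] at hp
    rw [Finsupp.smul_apply, dChain_apply_of_subset_Uneg chambers r
      (by rw [hcast _ (by omega), hcast _ (by omega)]; omega) _ hC2 ⟨x₀, hx₀C⟩ hCi,
      hcast p hp.2, smul_ite, smul_zero, smul_eq_mul]
  have hcoef := DFunLike.congr_fun hker C
  rw [Finsupp.finsetSum_apply, Finset.sum_congr rfl hterm, Finset.sum_ite_eq',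
    if_pos (Finset.mem_Icc.2 ⟨hi1, hin⟩)] at hcoef
  exact (mul_eq_zero.1 hcoef).resolve_right hΔ

/-- (`n = m + 2` lines, `1`-indexed as `H_p ↔ α ↑(p-1)`.) Assume
`q_∞ ≠ 1`. Let `φ = Σ_{p=1}^{n−1} c_p·[U_p] ∈ V` satisfy `d(φ) = 0`. If `1 ≤ i ≤ n−1`
and the lines `H_i` and `H_{i+1}` are not parallel, then `c_i = 0`. -/
theorem statement5 {m : ℕ} (α : Fin (m + 2) → AffForm) (a : Fin (m + 2) → ℝ)
    (hA : IsArrangement α) (hco : GoodCoords α a)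
    (chambers : Finset (Set Pt)) (hch : ∀ C : Set Pt, C ∈ chambers ↔ IsChamber α C)
    (q r : Fin (m + 2) → ℂ) (hq : ∀ i, q i ≠ 0) (hr0 : ∀ i, r i ≠ 0)
    (hrq : ∀ i, r i ^ 2 = q i)
    (hqinf : (∏ i, q i)⁻¹ ≠ 1)
    (c : ℕ → ℂ)
    (hker : ∑ p ∈ Finset.Icc 1 (m + 1),
      c p • dChain α chambers r ↑(p - 1) ↑p (Upos α p) = 0)
    (i : ℕ) (hi1 : 1 ≤ i) (hin : i ≤ m + 1)
    (hnp : ¬ (α ↑(i - 1)).Parallel (α ↑i)) :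
    c i = 0 :=
  statement5_general α a hco chambers hch q r hr0 hrq hqinf c hker i hi1 hin hnp

end
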